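/- arXiv:0903.0789 — 5 statements merged into one kernel-verified Lean document; each statement's English description precedes it below -/
import Mathlib

section
/- Let g1 and g2 be finite-dimensional real Lie algebras of compact type, each equipped with a symmetric decomposition g_i = h_i ⊕ m_i. Assume m1 has the rank-one property: any X, Y ∈ m1 with ⁅X,Y⁆ = 0 are linearly dependent. Let t ⊆ m1 × m2 be a Lie triple system of the product Lie algebra g1 × g2 such that the first projection π1 restricted to t is injective (this holds, for example, if ‖π2(x)‖ ≤ Λ‖x‖ for all x ∈ t for some constant Λ < 1, where norms come from the negative Killing forms). Then π1 is injective on the Lie subalgebra k := t + span{⁅x,y⁆ : x, y ∈ t}. -/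
/-!
Write `k = t + [t, t]`. If `x = u + s ∈ k` with `u ∈ t ⊆ m₁ × m₂`, `s ∈ span [t, t] ⊆ h₁ × g₂` and
`π₁ x = 0`, then `π₁ u = -π₁ s ∈ m₁ ∩ h₁ = 0`, so `u = 0` by injectivity on `t`. It remains to
show that `s = 0` whenever `π₁ s = 0`. For `u ∈ t` the bracket `⁅s, u⁆` lies in the triple system
`t` and has vanishing first component, so it is `0`: thus `π₂ s` centralises `π₂ t`. By invariance
of the Killing form `B₂`, `π₂ s` is then `B₂`-orthogonal to `[π₂ t, π₂ t]`, which contains `π₂ s`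
itself, and definiteness of `B₂` forces `π₂ s = 0`.
-/

section ProdLie

variable {𝕜 : Type*} [CommRing 𝕜] {L₁ L₂ : Type*} [LieRing L₁] [LieRing L₂]

instance Prod.instLieRing : LieRing (L₁ × L₂) where
  bracket x y := (⁅x.1, y.1⁆, ⁅x.2, y.2⁆)
  add_lie x y z := by ext <;> simp [add_lie]
  lie_add x y z := by ext <;> simp [lie_add]
  lie_self x := by ext <;> simp
  leibniz_lie x y z := by ext <;> exact leibniz_lie _ _ _

@[simp] theorem Prod.lie_def (x y : L₁ × L₂) : ⁅x, y⁆ = (⁅x.1, y.1⁆, ⁅x.2, y.2⁆) := rfl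

instance Prod.instLieAlgebra [LieAlgebra 𝕜 L₁] [LieAlgebra 𝕜 L₂] :
    LieAlgebra 𝕜 (L₁ × L₂) where
  lie_smul c x y := by ext <;> simp [lie_smul]

end ProdLie

section LieBrackets

variable {R L L' : Type*} [CommRing R] [LieRing L] [LieAlgebra R L] [LieRing L'] [LieAlgebra R L']

def lieBrackets (T : Set L) : Set L := {z | ∃ x ∈ T, ∃ y ∈ T, z = ⁅x, y⁆}

theorem image_lieBrackets (f : L →ₗ⁅R⁆ L') (T : Set L) :
    f '' lieBrackets T = lieBrackets (f '' T) := by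
  ext z
  constructor
  · rintro ⟨_, ⟨x, hx, y, hy, rfl⟩, rfl⟩
    exact ⟨f x, ⟨x, hx, rfl⟩, f y, ⟨y, hy, rfl⟩, f.map_lie x y⟩
  · rintro ⟨_, ⟨x, hx, rfl⟩, _, ⟨y, hy, rfl⟩, rfl⟩
    exact ⟨⁅x, y⁆, ⟨x, hx, y, hy, rfl⟩, f.map_lie x y⟩

theorem map_mem_span_lieBrackets (f : L →ₗ⁅R⁆ L') {T : Set L} {s : L}
    (hs : s ∈ Submodule.span R (lieBrackets T)) :
    f s ∈ Submodule.span R (lieBrackets (f '' T)) := by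
  have := Submodule.mem_map_of_mem (f := (f : L →ₗ[R] L')) hs
  rwa [Submodule.map_span, LieHom.coe_toLinearMap, image_lieBrackets] at this

theorem lie_mem_of_mem_span_lieBrackets {t : Submodule R L}
    (ht : ∀ x ∈ t, ∀ y ∈ t, ∀ z ∈ t, ⁅⁅x, y⁆, z⁆ ∈ t) {s u : L}
    (hs : s ∈ Submodule.span R (lieBrackets (t : Set L))) (hu : u ∈ t) : ⁅s, u⁆ ∈ t := by
  induction hs using Submodule.span_induction with
  | mem z hz =>
    obtain ⟨x, hx, y, hy, rfl⟩ := hz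
    exact ht x hx y hy u hu
  | zero => simp
  | add a b _ _ ha hb => simpa only [add_lie] using t.add_mem ha hb
  | smul c a _ ha => simpa only [smul_lie] using t.smul_mem c ha

theorem killingForm_eq_zero_of_mem_span_lieBrackets {T : Set L} {z s : L}
    (hz : ∀ x ∈ T, ⁅z, x⁆ = 0) (hs : s ∈ Submodule.span R (lieBrackets T)) :
    killingForm R L z s = 0 := by
  suffices Submodule.span R (lieBrackets T) ≤ LinearMap.ker (killingForm R L z) from this hs
  rw [Submodule.span_le]
  rintro _ ⟨x, hx, y, _, rfl⟩
  rw [SetLike.mem_coe, LinearMap.mem_ker, ← LieModule.traceForm_apply_lie_apply, hz x hx,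
    map_zero, LinearMap.zero_apply]

end LieBrackets

section Prod

-- Mathlib's `LieHom.fst`/`LieHom.snd` are built on `LieAlgebra.Prod.instLieRing`, which is
-- definitionally equal to `Prod.instLieRing` above, so they apply here.
variable {R L₁ L₂ : Type*} [CommRing R] [LieRing L₁] [LieAlgebra R L₁]
  [LieRing L₂] [LieAlgebra R L₂]

theorem eq_zero_of_mem_span_lieBrackets_of_fst_eq_zero
    (hB : ∀ x : L₂, killingForm R L₂ x x = 0 → x = 0) {t : Submodule R (L₁ × L₂)}
    (ht : ∀ x ∈ t, ∀ y ∈ t, ∀ z ∈ t, ⁅⁅x, y⁆, z⁆ ∈ t)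
    (hinj : Set.InjOn (LinearMap.fst R L₁ L₂) t) {s : L₁ × L₂}
    (hs : s ∈ Submodule.span R (lieBrackets (t : Set (L₁ × L₂)))) (hs₁ : s.1 = 0) : s = 0 := by
  have hcentral : ∀ x ∈ LieHom.snd R L₁ L₂ '' t, ⁅s.2, x⁆ = 0 := by
    rintro _ ⟨u, hu, rfl⟩
    have hsu : ⁅s, u⁆ = 0 :=
      hinj (lie_mem_of_mem_span_lieBrackets ht hs hu) t.zero_mem (by simp [hs₁])
    exact congrArg Prod.snd hsu
  exact Prod.ext hs₁ <| hB s.2 <| killingForm_eq_zero_of_mem_span_lieBrackets hcentral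
    (map_mem_span_lieBrackets (LieHom.snd R L₁ L₂) hs)

end Prod

theorem injOn_fst_sup_span_brackets_general
    {g₁ g₂ : Type*} [LieRing g₁] [LieAlgebra ℝ g₁]
    [LieRing g₂] [LieAlgebra ℝ g₂]
    (hcpt₂ : ∀ x : g₂, x ≠ 0 → killingForm ℝ g₂ x x < 0)
    (h₁ m₁ : Submodule ℝ g₁) (hco₁ : IsCompl h₁ m₁)
    (hmm₁ : ∀ x ∈ m₁, ∀ y ∈ m₁, ⁅x, y⁆ ∈ h₁)
    (m₂ : Submodule ℝ g₂)
    (t : Submodule ℝ (g₁ × g₂))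
    (htsub : t ≤ m₁.prod m₂)
    (ht : ∀ x ∈ t, ∀ y ∈ t, ∀ z ∈ t, ⁅⁅x, y⁆, z⁆ ∈ t)
    (hinj : Set.InjOn (LinearMap.fst ℝ g₁ g₂) t) :
    Set.InjOn (LinearMap.fst ℝ g₁ g₂)
      ((t ⊔ Submodule.span ℝ {z | ∃ x ∈ t, ∃ y ∈ t, z = ⁅x, y⁆} : Submodule ℝ (g₁ × g₂)) :
        Set (g₁ × g₂)) := by
  have hB : ∀ x : g₂, killingForm ℝ g₂ x x = 0 → x = 0 := fun x hx =>
    not_not.mp fun hne => (hcpt₂ x hne).ne hx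
  rw [← LinearMap.disjoint_ker_iff_injOn, LinearMap.disjoint_ker]
  intro x hx hx₁
  obtain ⟨u, hu, s, hs, rfl⟩ := Submodule.mem_sup.mp hx
  have hs₁ : s.1 ∈ h₁ := by
    have hspan : Submodule.span ℝ (lieBrackets (LieHom.fst ℝ g₁ g₂ '' t)) ≤ h₁ := by
      rw [Submodule.span_le]
      rintro _ ⟨_, ⟨a, ha, rfl⟩, _, ⟨b, hb, rfl⟩, rfl⟩
      exact hmm₁ _ (htsub ha).1 _ (htsub hb).1
    exact hspan (map_mem_span_lieBrackets (LieHom.fst ℝ g₁ g₂) hs)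
  have hsum : u.1 + s.1 = 0 := hx₁
  have hu₁h : u.1 ∈ h₁ := by
    rw [eq_neg_of_add_eq_zero_left hsum]
    exact h₁.neg_mem hs₁
  have hu₁ : u.1 = 0 := Submodule.disjoint_def.mp hco₁.disjoint u.1 hu₁h (htsub hu).1
  have hu : u = 0 := hinj hu t.zero_mem (by simpa using hu₁)
  subst hu
  simpa using eq_zero_of_mem_span_lieBrackets_of_fst_eq_zero hB ht hinj hs (by simpa using hsum)

/-- Let `g₁, g₂` be finite-dimensional real Lie algebras of compact type
(negative-definite Killing forms), each with a symmetric decomposition `gᵢ = hᵢ ⊕ mᵢ`,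
and suppose `m₁` has the rank-one property.  If `t ⊆ m₁ × m₂` is a Lie triple system of
`g₁ × g₂` on which the first projection `π₁` is injective, then `π₁` is injective on the
Lie subalgebra `k := t + span {⁅x,y⁆ : x, y ∈ t}`. -/
theorem injOn_fst_sup_span_brackets
    {g₁ g₂ : Type*} [LieRing g₁] [LieAlgebra ℝ g₁] [FiniteDimensional ℝ g₁]
    [LieRing g₂] [LieAlgebra ℝ g₂] [FiniteDimensional ℝ g₂]
    (hcpt₁ : ∀ x : g₁, x ≠ 0 → killingForm ℝ g₁ x x < 0)
    (hcpt₂ : ∀ x : g₂, x ≠ 0 → killingForm ℝ g₂ x x < 0)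
    (h₁ m₁ : Submodule ℝ g₁) (hco₁ : IsCompl h₁ m₁)
    (hhh₁ : ∀ x ∈ h₁, ∀ y ∈ h₁, ⁅x, y⁆ ∈ h₁)
    (hhm₁ : ∀ x ∈ h₁, ∀ y ∈ m₁, ⁅x, y⁆ ∈ m₁)
    (hmm₁ : ∀ x ∈ m₁, ∀ y ∈ m₁, ⁅x, y⁆ ∈ h₁)
    (h₂ m₂ : Submodule ℝ g₂) (hco₂ : IsCompl h₂ m₂)
    (hhh₂ : ∀ x ∈ h₂, ∀ y ∈ h₂, ⁅x, y⁆ ∈ h₂)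
    (hhm₂ : ∀ x ∈ h₂, ∀ y ∈ m₂, ⁅x, y⁆ ∈ m₂)
    (hmm₂ : ∀ x ∈ m₂, ∀ y ∈ m₂, ⁅x, y⁆ ∈ h₂)
    (hrank : ∀ X ∈ m₁, ∀ Y ∈ m₁, ⁅X, Y⁆ = 0 → ¬ LinearIndependent ℝ ![X, Y])
    (t : Submodule ℝ (g₁ × g₂))
    (htsub : t ≤ m₁.prod m₂)
    (ht : ∀ x ∈ t, ∀ y ∈ t, ∀ z ∈ t, ⁅⁅x, y⁆, z⁆ ∈ t)
    (hinj : Set.InjOn (LinearMap.fst ℝ g₁ g₂) t) :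
    Set.InjOn (LinearMap.fst ℝ g₁ g₂)
      ((t ⊔ Submodule.span ℝ {z | ∃ x ∈ t, ∃ y ∈ t, z = ⁅x, y⁆} : Submodule ℝ (g₁ × g₂)) :
        Set (g₁ × g₂)) :=
  injOn_fst_sup_span_brackets_general hcpt₂ h₁ m₁ hco₁ hmm₁ m₂ t htsub ht hinj
end

section
/- In so(n+1), for all v, w ∈ ℝⁿ, the bracket ⁅X_v, X_w⁆ vanishes if and only if v and w are linearly dependent. (This expresses that the symmetric pair (so(n+1), so(n)) has rank one.) -/
open Matrix

/-- For `v ∈ ℝⁿ`, the matrix `X_v ∈ so(n+1)` with `(0,j)` entry `v_j`, `(j,0)` entry `-v_j`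
(`j = 1, …, n`) and all other entries zero. -/
def Xmat {n : ℕ} (v : Fin n → ℝ) : Matrix (Fin (n + 1)) (Fin (n + 1)) ℝ :=
  Matrix.of fun i j =>
    if hi : i = 0 then (if hj : j = 0 then 0 else v (j.pred hj))
    else if hj : j = 0 then -v (i.pred hi) else 0

/-! The bracket `⁅X_v, X_w⁆` vanishes on row and column `0`, and its remaining entries are the
`2 × 2` minors `w_i v_j - v_i w_j` of the pair `(v, w)`; all of these vanish exactly when `v`
and `w` are proportional. -/

theorem vecMulVec_eq_vecMulVec_swap_iff {K ι : Type*} [Field K] {v w : ι → K} :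
    vecMulVec v w = vecMulVec w v ↔ ¬ LinearIndependent K ![v, w] := by
  rw [linearIndependent_fin2]
  simp only [Matrix.cons_val_zero, Matrix.cons_val_one, not_and, not_forall, not_not]
  constructor
  · intro hsymm hw
    obtain ⟨i, hi⟩ : ∃ i, w i ≠ 0 := Function.ne_iff.mp hw
    refine ⟨v i / w i, funext fun j => ?_⟩
    have hij : v i * w j = w i * v j := congrFun (congrFun hsymm i) j
    simp only [Pi.smul_apply, smul_eq_mul]
    rw [div_mul_eq_mul_div, div_eq_iff hi]
    linear_combination hij
  · intro hdep
    by_cases hw : w = 0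
    · simp [hw]
    · obtain ⟨a, rfl⟩ := hdep hw
      ext i j
      simp only [vecMulVec_apply, Pi.smul_apply, smul_eq_mul]
      ring

section Xmat

variable {n : ℕ} (v w : Fin n → ℝ)

theorem Xmat_bracket_zero_left (j : Fin (n + 1)) : ⁅Xmat v, Xmat w⁆ 0 j = 0 := by
  cases j using Fin.cases <;>
    simp [Ring.lie_def, mul_apply, Xmat, Fin.sum_univ_succ, mul_comm]

theorem Xmat_bracket_zero_right (i : Fin (n + 1)) : ⁅Xmat v, Xmat w⁆ i 0 = 0 := by
  cases i using Fin.cases <;>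
    simp [Ring.lie_def, mul_apply, Xmat, Fin.sum_univ_succ, mul_comm]

theorem Xmat_bracket_succ_succ (i j : Fin n) :
    ⁅Xmat v, Xmat w⁆ i.succ j.succ = vecMulVec w v i j - vecMulVec v w i j := by
  simp only [Xmat, dite_eq_ite, Ring.lie_def, Matrix.sub_apply, mul_apply, of_apply,
    Fin.succ_ne_zero, ↓reduceDIte, Fin.pred_succ, ↓reduceIte, mul_ite, ite_mul, neg_mul, zero_mul,
    mul_zero, Finset.sum_ite_eq', Finset.mem_univ, sub_neg_eq_add, vecMulVec_apply]
  ring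

theorem Xmat_bracket_eq_zero_iff : ⁅Xmat v, Xmat w⁆ = 0 ↔ vecMulVec v w = vecMulVec w v := by
  constructor
  · intro h
    ext i j
    have hij := congrFun (congrFun h i.succ) j.succ
    rw [Xmat_bracket_succ_succ] at hij
    exact (sub_eq_zero.mp hij).symm
  · intro h
    ext i j
    cases i using Fin.cases with
    | zero => exact Xmat_bracket_zero_left v w j
    | succ i =>
      cases j using Fin.cases with
      | zero => exact Xmat_bracket_zero_right v w i.succ
      | succ j => simp [Xmat_bracket_succ_succ, h]

end Xmat

/-- In `so(n+1)` the bracket `⁅X_v, X_w⁆` vanishes if and only if `v` and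
`w` are linearly dependent: the symmetric pair `(so(n+1), so(n))` has rank one. -/
theorem Xmat_bracket_eq_zero_iff_not_linearIndependent {n : ℕ} (v w : Fin n → ℝ) :
    ⁅Xmat v, Xmat w⁆ = 0 ↔ ¬ LinearIndependent ℝ ![v, w] :=
  (Xmat_bracket_eq_zero_iff v w).trans vecMulVec_eq_vecMulVec_swap_iff
end

section
/- Let h be a real Lie algebra and let M be a nonzero finite-dimensional real inner product space carrying a Lie module structure over h such that for every H ∈ h the operator x ↦ H • x on M is skew-adjoint with respect to the inner product. Assume M is irreducible as an h-module, i.e. its only h-invariant subspaces are {0} and M. Then every symmetric bilinear form T : M × M → ℝ satisfying T(H•x, y) + T(x, H•y) = 0 for all H ∈ h and x, y ∈ M is a scalar multiple of the inner product: there exists ρ ∈ ℝ with T(x,y) = ρ·⟨x,y⟩ for all x, y ∈ M. -/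
/-!
Represent `T` by the operator `A` with `⟪A x, y⟫ = T x y`. Symmetry of `T` makes `A`
self-adjoint, so `A` has a real eigenvalue `ρ`; invariance of `T` together with skew-adjointness
of the action makes `A` commute with the action, so the `ρ`-eigenspace is a nonzero invariant
subspace. By irreducibility it is all of `M`, i.e. `A = ρ • id`.
-/

open scoped RealInnerProductSpace

section InnerRepr

variable {M : Type*} [NormedAddCommGroup M] [InnerProductSpace ℝ M] [FiniteDimensional ℝ M]

noncomputable def LinearMap.innerRepr (T : M →ₗ[ℝ] M →ₗ[ℝ] ℝ) : M →ₗ[ℝ] M where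
  toFun x := (InnerProductSpace.toDual ℝ M).symm (LinearMap.toContinuousLinearMap (T x))
  map_add' x y := by simp [map_add]
  map_smul' c x := by simp [map_smul]

theorem LinearMap.inner_innerRepr_apply (T : M →ₗ[ℝ] M →ₗ[ℝ] ℝ) (x y : M) :
    ⟪T.innerRepr x, y⟫ = T x y := by
  simp [LinearMap.innerRepr, InnerProductSpace.toDual_symm_apply]

theorem LinearMap.isSymmetric_innerRepr {T : M →ₗ[ℝ] M →ₗ[ℝ] ℝ} (hsymm : ∀ x y, T x y = T y x) :
    T.innerRepr.IsSymmetric := fun x y => by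
  rw [T.inner_innerRepr_apply, hsymm, ← T.inner_innerRepr_apply, real_inner_comm]

theorem LinearMap.innerRepr_lie {h : Type*} [LieRing h] [LieRingModule h M]
    (hskew : ∀ (H : h) (x y : M), ⟪⁅H, x⁆, y⟫ + ⟪x, ⁅H, y⁆⟫ = 0)
    {T : M →ₗ[ℝ] M →ₗ[ℝ] ℝ} (hinv : ∀ (H : h) (x y : M), T ⁅H, x⁆ y + T x ⁅H, y⁆ = 0)
    (H : h) (x : M) : T.innerRepr ⁅H, x⁆ = ⁅H, T.innerRepr x⁆ := by
  refine ext_inner_right ℝ fun y => ?_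
  have hT := hinv H x y
  have hA := hskew H (T.innerRepr x) y
  rw [T.inner_innerRepr_apply] at hA ⊢
  linarith

end InnerRepr

section Schur

variable {h M : Type*} [LieRing h] [LieAlgebra ℝ h] [AddCommGroup M] [Module ℝ M]
  [LieRingModule h M] [LieModule ℝ h M] {A : Module.End ℝ M}

theorem Module.End.lie_mem_eigenspace (hA : ∀ (H : h) (x : M), A ⁅H, x⁆ = ⁅H, A x⁆)
    {ρ : ℝ} (H : h) {x : M} (hx : x ∈ A.eigenspace ρ) : ⁅H, x⁆ ∈ A.eigenspace ρ := by
  rw [Module.End.mem_eigenspace_iff] at hx ⊢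
  rw [hA, hx, lie_smul]

theorem Module.End.apply_eq_smul_of_hasEigenvalue_of_lie_comm
    (hirr : ∀ N : Submodule ℝ M, (∀ (H : h), ∀ x ∈ N, ⁅H, x⁆ ∈ N) → N = ⊥ ∨ N = ⊤)
    (hA : ∀ (H : h) (x : M), A ⁅H, x⁆ = ⁅H, A x⁆) {ρ : ℝ} (hρ : A.HasEigenvalue ρ) (x : M) :
    A x = ρ • x := by
  have htop : A.eigenspace ρ = ⊤ :=
    (hirr _ fun H _ => Module.End.lie_mem_eigenspace hA H).resolve_left
      (Module.End.hasEigenvalue_iff.mp hρ)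
  exact Module.End.mem_eigenspace_iff.mp (htop ▸ Submodule.mem_top)

end Schur

/-- Schur-type lemma.  Let `M` be a nonzero finite-dimensional real
inner product space with a Lie module structure over a real Lie algebra `h` acting by
skew-adjoint operators, and suppose `M` is irreducible (its only `h`-invariant subspaces
are `{0}` and `M`).  Then every `h`-invariant symmetric bilinear form on `M` is a scalar
multiple of the inner product. -/
theorem invariant_symm_bilin_eq_smul_inner
    {h : Type*} [LieRing h] [LieAlgebra ℝ h]
    {M : Type*} [NormedAddCommGroup M] [InnerProductSpace ℝ M] [FiniteDimensional ℝ M]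
    [Nontrivial M] [LieRingModule h M] [LieModule ℝ h M]
    (hskew : ∀ (H : h) (x y : M), ⟪⁅H, x⁆, y⟫ + ⟪x, ⁅H, y⁆⟫ = 0)
    (hirr : ∀ N : Submodule ℝ M, (∀ (H : h), ∀ x ∈ N, ⁅H, x⁆ ∈ N) → N = ⊥ ∨ N = ⊤)
    (T : M →ₗ[ℝ] M →ₗ[ℝ] ℝ)
    (hsymm : ∀ x y : M, T x y = T y x)
    (hinv : ∀ (H : h) (x y : M), T ⁅H, x⁆ y + T x ⁅H, y⁆ = 0) :
    ∃ ρ : ℝ, ∀ x y : M, T x y = ρ * ⟪x, y⟫ := by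
  obtain ⟨ρ, hρ⟩ : ∃ ρ : ℝ, Module.End.HasEigenvalue T.innerRepr ρ :=
    ⟨_, (LinearMap.isSymmetric_innerRepr hsymm).hasEigenvalue_iSup_of_finiteDimensional⟩
  refine ⟨ρ, fun x y => ?_⟩
  rw [← T.inner_innerRepr_apply,
    Module.End.apply_eq_smul_of_hasEigenvalue_of_lie_comm hirr
      (LinearMap.innerRepr_lie hskew hinv) hρ x, real_inner_smul_left]
end

section
/- Let g be a finite-dimensional real Lie algebra of compact type (its Killing form is negative definite), with a symmetric decomposition g = h ⊕ m. For X, Y ∈ m define Ric(X,Y) := tr(Z ↦ −⁅X,⁅Y,Z⁆⁆), the trace of the linear endomorphism of m sending Z to −⁅X,⁅Y,Z⁆⁆ (which indeed maps m into m). Then Ric is a symmetric, positive-definite bilinear form on m. -/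
/-!
For `X, Y ∈ m` the endomorphism `ad X ∘ ad Y` preserves both `h` and `m`, while `ad X` and
`ad Y` swap them, so cyclicity of the trace turns its trace on `h` into the trace of
`ad Y ∘ ad X` on `m`: the Killing form satisfies `B(X, Y) = -Ric(X, Y) - Ric(Y, X)`.
The difference `Ric(X, Y) - Ric(Y, X)` is, up to sign, the trace on `m` of `ad ⁅X, Y⁆` with
`⁅X, Y⁆ ∈ h`; this endomorphism of `m` is skew-adjoint for the restriction of `B` to `m`,
which is definite, so its trace vanishes. Hence `Ric = -B / 2` on `m`.
-/

open LinearMap Set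

namespace LinearMap

section Trace

variable {R M : Type*} [CommRing R] [AddCommGroup M] [Module R M]
  {p q : Submodule R M} [Module.Free R p] [Module.Finite R p] [Module.Free R q] [Module.Finite R q]

theorem trace_eq_trace_restrict_add_trace_restrict (hpq : IsCompl p q) {f : M →ₗ[R] M}
    (hp : MapsTo f p p) (hq : MapsTo f q q) :
    trace R M f = trace R p (f.restrict hp) + trace R q (f.restrict hq) := by
  let N : Bool → Submodule R M := fun b => bif b then p else q
  have hN : DirectSum.IsInternal N :=
    (DirectSum.isInternal_submodule_iff_isCompl N (i := true) (j := false) (by decide)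
      (by ext b; cases b <;> simp)).mpr hpq
  have : ∀ i, Module.Free R (N i) := Bool.rec ‹_› ‹_›
  have : ∀ i, Module.Finite R (N i) := Bool.rec ‹_› ‹_›
  rw [trace_eq_sum_trace_restrict hN (f := f) (Bool.rec hq hp), Fintype.sum_bool]
  rfl

theorem trace_restrict_comp_comm {f g : M →ₗ[R] M} (hf : MapsTo f p q) (hg : MapsTo g q p) :
    trace R p ((g ∘ₗ f).restrict (hg.comp hf))
      = trace R q ((f ∘ₗ g).restrict (hf.comp hg)) :=
  trace_comp_comm' (f.restrict hf) (g.restrict hg)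

theorem trace_comp_eq_of_mapsTo_swap (hpq : IsCompl p q) {f g : M →ₗ[R] M}
    (hfp : MapsTo f p q) (hfq : MapsTo f q p) (hgp : MapsTo g p q) (hgq : MapsTo g q p) :
    trace R M (f ∘ₗ g) = trace R q ((g ∘ₗ f).restrict (hgp.comp hfq))
      + trace R q ((f ∘ₗ g).restrict (hfp.comp hgq)) := by
  rw [trace_eq_trace_restrict_add_trace_restrict (f := f ∘ₗ g) hpq (hfq.comp hgp)
    (hfp.comp hgq), trace_restrict_comp_comm hgp hfq]

end Trace

namespace BilinForm

variable {K V : Type*} [Field K] [AddCommGroup V] [Module K V] [FiniteDimensional K V]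

theorem trace_eq_zero_of_isSkewAdjoint [CharZero K] {B : LinearMap.BilinForm K V}
    (hB : B.Nondegenerate) {f : V →ₗ[K] V} (hf : B.IsSkewAdjoint f) : trace K V f = 0 := by
  have hconj : (B.toDual hB).conj (-f) = Module.Dual.transpose f := by
    ext φ v
    obtain ⟨x, rfl⟩ := (B.toDual hB).surjective φ
    simp [LinearEquiv.conj_apply, toDual_def, Module.Dual.transpose_apply, hf x v]
  have := trace_conj' (-f) (B.toDual hB)
  rw [hconj, trace_transpose', map_neg] at this
  exact CharZero.eq_neg_self_iff.mp this

theorem nondegenerate_restrict_of_anisotropic {B : LinearMap.BilinForm K V}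
    (hB : B.toQuadraticMap.Anisotropic) (W : Submodule K V) : (B.restrict W).Nondegenerate :=
  .ofSeparatingLeft <| separatingLeft_of_anisotropic fun w hw ↦ Subtype.ext <| hB w hw

end BilinForm

end LinearMap

namespace LieAlgebra

variable {K L : Type*} [Field K] [CharZero K] [LieRing L] [LieAlgebra K L] [FiniteDimensional K L]
  {m : Submodule K L}

theorem trace_restrict_ad_eq_zero (hm : ((killingForm K L).restrict m).Nondegenerate) {z : L}
    (hz : MapsTo (ad K L z) m m) : trace K m ((ad K L z).restrict hz) = 0 :=
  BilinForm.trace_eq_zero_of_isSkewAdjoint hm fun x y ↦ by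
    show killingForm K L ⁅z, (x : L)⁆ y = killingForm K L x (-⁅z, (y : L)⁆)
    rw [map_neg]
    exact LieModule.traceForm_apply_lie_apply' K L L z x y

theorem trace_restrict_ad_comp_ad_comm (hm : ((killingForm K L).restrict m).Nondegenerate)
    {x y : L} (hxy : MapsTo (ad K L x ∘ₗ ad K L y) m m)
    (hyx : MapsTo (ad K L y ∘ₗ ad K L x) m m) :
    trace K m ((ad K L x ∘ₗ ad K L y).restrict hxy)
      = trace K m ((ad K L y ∘ₗ ad K L x).restrict hyx) := by
  have had : ad K L ⁅x, y⁆ = ad K L x ∘ₗ ad K L y - ad K L y ∘ₗ ad K L x := by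
    ext v; simp
  have hz : MapsTo (ad K L ⁅x, y⁆) m m := fun v hv ↦ by
    rw [had]; exact m.sub_mem (hxy hv) (hyx hv)
  have hsplit : (ad K L ⁅x, y⁆).restrict hz = (ad K L x ∘ₗ ad K L y).restrict hxy
      - (ad K L y ∘ₗ ad K L x).restrict hyx := by
    ext v; exact congr($had v)
  rw [← sub_eq_zero, ← map_sub, ← hsplit, trace_restrict_ad_eq_zero hm hz]

end LieAlgebra

open LieAlgebra

theorem ricci_symm_posDef_general
    {g : Type*} [LieRing g] [LieAlgebra ℝ g] [FiniteDimensional ℝ g]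
    (hcpt : ∀ x : g, x ≠ 0 → killingForm ℝ g x x < 0)
    (h m : Submodule ℝ g) (hco : IsCompl h m)
    (hhm : ∀ x ∈ h, ∀ y ∈ m, ⁅x, y⁆ ∈ m)
    (hmm : ∀ x ∈ m, ∀ y ∈ m, ⁅x, y⁆ ∈ h)
    (T : m →ₗ[ℝ] m →ₗ[ℝ] (m →ₗ[ℝ] m))
    (hT : ∀ X Y Z : m, ((T X Y Z : m) : g) = -⁅(X : g), ⁅(Y : g), (Z : g)⁆⁆) :
    (∀ X Y : m, LinearMap.trace ℝ m (T X Y) = LinearMap.trace ℝ m (T Y X)) ∧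
      (∀ X : m, X ≠ 0 → 0 < LinearMap.trace ℝ m (T X X)) := by
  have ad_m_h (X : m) : MapsTo (ad ℝ g X) m h := fun _ hY ↦ hmm X X.2 _ hY
  have ad_h_m (X : m) : MapsTo (ad ℝ g X) h m := fun Y hY ↦ by
    rw [ad_apply, ← lie_skew]
    exact m.neg_mem (hhm Y hY X X.2)
  have trace_T (X Y : m) : trace ℝ m (T X Y)
      = -trace ℝ m ((ad ℝ g X ∘ₗ ad ℝ g Y).restrict ((ad_h_m X).comp (ad_m_h Y))) := by
    rw [← map_neg]
    congr 1
    ext Z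
    exact hT X Y Z
  have hB : ((killingForm ℝ g).restrict m).Nondegenerate :=
    BilinForm.nondegenerate_restrict_of_anisotropic (B := killingForm ℝ g)
      (fun x hx ↦ by_contra fun hne ↦ (hcpt x hne).ne hx) m
  refine ⟨fun X Y ↦ by rw [trace_T, trace_T, trace_restrict_ad_comp_ad_comm hB],
    fun X hX ↦ ?_⟩
  have hkill := trace_comp_eq_of_mapsTo_swap hco (ad_h_m X) (ad_m_h X) (ad_h_m X) (ad_m_h X)
  rw [← killingForm_apply_apply] at hkill
  have hneg := hcpt X (by simpa using hX)
  rw [trace_T]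
  linarith

/-- Let `g` be a finite-dimensional real Lie algebra of compact type
(negative-definite Killing form) with a symmetric decomposition `g = h ⊕ m`.  For
`X, Y ∈ m`, let `Ric(X,Y)` be the trace of the endomorphism `Z ↦ -⁅X,⁅Y,Z⁆⁆` of `m`
(here encoded by a bilinear map `T` with `T X Y Z = -⁅X,⁅Y,Z⁆⁆` for `X, Y, Z ∈ m`).
Then `Ric` is a symmetric, positive-definite bilinear form on `m`. -/
theorem ricci_symm_posDef
    {g : Type*} [LieRing g] [LieAlgebra ℝ g] [FiniteDimensional ℝ g]
    (hcpt : ∀ x : g, x ≠ 0 → killingForm ℝ g x x < 0)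
    (h m : Submodule ℝ g) (hco : IsCompl h m)
    (hhh : ∀ x ∈ h, ∀ y ∈ h, ⁅x, y⁆ ∈ h)
    (hhm : ∀ x ∈ h, ∀ y ∈ m, ⁅x, y⁆ ∈ m)
    (hmm : ∀ x ∈ m, ∀ y ∈ m, ⁅x, y⁆ ∈ h)
    (T : m →ₗ[ℝ] m →ₗ[ℝ] (m →ₗ[ℝ] m))
    (hT : ∀ X Y Z : m, ((T X Y Z : m) : g) = -⁅(X : g), ⁅(Y : g), (Z : g)⁆⁆) :
    (∀ X Y : m, LinearMap.trace ℝ m (T X Y) = LinearMap.trace ℝ m (T Y X)) ∧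
      (∀ X : m, X ≠ 0 → 0 < LinearMap.trace ℝ m (T X X)) :=
  ricci_symm_posDef_general hcpt h m hco hhm hmm T hT
end

section
/- Let g be a finite-dimensional real Lie algebra of compact type with a symmetric decomposition g = h ⊕ m, and let ⟨x,y⟩ := −B(x,y) be the inner product given by the negative Killing form. For X, Y ∈ m define Ric(X,Y) := tr(Z ↦ −⁅X,⁅Y,Z⁆⁆ : m → m). Then for every X ∈ m and every orthonormal basis Z_1, …, Z_k of m with respect to ⟨·,·⟩, one has Ric(X,X) = Σ_{i=1}^{k} ‖⁅X, Z_i⁆‖². -/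
namespace Module.Basis

variable {ι R M : Type*} [Fintype ι] [DecidableEq ι] [CommRing R] [AddCommGroup M] [Module R M]

lemma repr_apply_eq_of_orthonormal (B : LinearMap.BilinForm R M) (b : Basis ι R M)
    (hb : ∀ i j, B (b i) (b j) = if i = j then 1 else 0) (v : M) (i : ι) :
    b.repr v i = B v (b i) := by
  conv_rhs => rw [← b.sum_repr v]
  simp only [map_sum, map_smul, LinearMap.sum_apply, LinearMap.smul_apply,
    hb, smul_eq_mul, mul_ite, mul_one, mul_zero, Finset.sum_ite_eq', Finset.mem_univ, if_true]

lemma trace_eq_sum_of_orthonormal (B : LinearMap.BilinForm R M) (b : Basis ι R M)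
    (hb : ∀ i j, B (b i) (b j) = if i = j then 1 else 0) (f : M →ₗ[R] M) :
    LinearMap.trace R M f = ∑ i, B (f (b i)) (b i) := by
  simp only [LinearMap.trace_eq_matrix_trace R b, Matrix.trace, Matrix.diag_apply,
    LinearMap.toMatrix_apply, b.repr_apply_eq_of_orthonormal B hb]

end Module.Basis

theorem ricci_apply_self_eq_sum_brackets_norm_sq_general
    {g : Type*} [LieRing g] [LieAlgebra ℝ g]
    (m : Submodule ℝ g)
    (T : m →ₗ[ℝ] m →ₗ[ℝ] (m →ₗ[ℝ] m))
    (hT : ∀ X Y Z : m, ((T X Y Z : m) : g) = -⁅(X : g), ⁅(Y : g), (Z : g)⁆⁆)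
    {k : ℕ} (b : Module.Basis (Fin k) ℝ m)
    (hortho : ∀ i j : Fin k,
      -(killingForm ℝ g (b i : g) (b j : g)) = if i = j then 1 else 0) :
    ∀ X : m, LinearMap.trace ℝ m (T X X) =
      ∑ i : Fin k, -(killingForm ℝ g ⁅(X : g), (b i : g)⁆ ⁅(X : g), (b i : g)⁆) := by
  intro X
  let B : LinearMap.BilinForm ℝ m := (-killingForm ℝ g).compl₁₂ m.subtype m.subtype
  rw [b.trace_eq_sum_of_orthonormal B hortho]
  refine Finset.sum_congr rfl fun i _ => ?_
  -- the Killing form is `ad`-invariant, so `ad X` is skew-adjoint for it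
  simp only [B, LinearMap.compl₁₂_apply, Submodule.subtype_apply, hT, LinearMap.neg_apply,
    map_neg, neg_neg, LieModule.traceForm_apply_lie_apply']

/-- Let `g` be a finite-dimensional real Lie algebra of compact type
with symmetric decomposition `g = h ⊕ m`, with inner product `⟨x,y⟩ = -B(x,y)` given by
the negative of the Killing form `B`.  Let `Ric(X,Y)` be the trace of the endomorphism
`Z ↦ -⁅X,⁅Y,Z⁆⁆` of `m` (encoded by a bilinear map `T` with `T X Y Z = -⁅X,⁅Y,Z⁆⁆`).
Then for every `X ∈ m` and every orthonormal basis `Z₁, …, Z_k` of `m`,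
`Ric(X,X) = Σᵢ ‖⁅X, Zᵢ⁆‖²`. -/
theorem ricci_apply_self_eq_sum_brackets_norm_sq
    {g : Type*} [LieRing g] [LieAlgebra ℝ g] [FiniteDimensional ℝ g]
    (hcpt : ∀ x : g, x ≠ 0 → killingForm ℝ g x x < 0)
    (h m : Submodule ℝ g) (hco : IsCompl h m)
    (hhh : ∀ x ∈ h, ∀ y ∈ h, ⁅x, y⁆ ∈ h)
    (hhm : ∀ x ∈ h, ∀ y ∈ m, ⁅x, y⁆ ∈ m)
    (hmm : ∀ x ∈ m, ∀ y ∈ m, ⁅x, y⁆ ∈ h)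
    (T : m →ₗ[ℝ] m →ₗ[ℝ] (m →ₗ[ℝ] m))
    (hT : ∀ X Y Z : m, ((T X Y Z : m) : g) = -⁅(X : g), ⁅(Y : g), (Z : g)⁆⁆)
    {k : ℕ} (b : Module.Basis (Fin k) ℝ m)
    (hortho : ∀ i j : Fin k,
      -(killingForm ℝ g (b i : g) (b j : g)) = if i = j then 1 else 0) :
    ∀ X : m, LinearMap.trace ℝ m (T X X) =
      ∑ i : Fin k, -(killingForm ℝ g ⁅(X : g), (b i : g)⁆ ⁅(X : g), (b i : g)⁆) :=
  ricci_apply_self_eq_sum_brackets_norm_sq_general m T hT b hortho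
end
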